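/- For the Poisson bracket on ℂ[x,y] defined by {x,y} = y (so {f,g} = y(∂f/∂x ∂g/∂y − ∂f/∂y ∂g/∂x)), the zeroth Poisson cohomology (the Casimirs) equals ℂ, and the first Poisson cohomology, i.e., Poisson vector fields modulo Hamiltonian vector fields, is one-dimensional, spanned by the class of ∂/∂x. -/

import Mathlib

/-!
Testing the Poisson condition on the pair `(x, y)` alone gives `g = y ∂ₓf + y ∂_y g`, i.e.
`(a + 1) f_{a+1,b} + b g_{a,b+1} = 0` and `g_{a,0} = 0` for the coefficients of `f` and `g`.
Since `y ∂_y` acts on `x^a y^b` by the scalar `b`, these relations let one solve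
`f = c - y ∂_y h`, `g = y ∂ₓ h` coefficient by coefficient: `h` is read off from `f` in positive
`y`-degree and from `g` in `y`-degree `0`. Neither `y ∂_y h` nor `y ∂ₓ h` has a constant term,
which is why `∂/∂x` is not Hamiltonian.
-/

noncomputable section

open MvPolynomial

abbrev R2 := MvPolynomial (Fin 2) ℂ

def Xv : R2 := X 0
def Yv : R2 := X 1

/-- The Poisson bracket `{f,g} = y(∂f/∂x ∂g/∂y − ∂f/∂y ∂g/∂x)` on `ℂ[x,y]`. -/
def br (f g : R2) : R2 :=
  Yv * (pderiv 0 f * pderiv 1 g - pderiv 1 f * pderiv 0 g)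

/-- `X = f∂/∂x + g∂/∂y` applied to a polynomial. -/
def vf (f g p : R2) : R2 := f * pderiv 0 p + g * pderiv 1 p

/-- `(f,g)` is a Poisson vector field for `π₁ = y ∂/∂x ∧ ∂/∂y`. -/
def IsPoissonVF (f g : R2) : Prop :=
  ∀ p q : R2, vf f g (br p q) = br (vf f g p) q + br p (vf f g q)

namespace MvPolynomial

variable {σ R : Type*}

theorem pderiv_pderiv_comm [CommSemiring R] (i j : σ) (p : MvPolynomial σ R) :
    pderiv i (pderiv j p) = pderiv j (pderiv i p) := by
  classical
  by_cases hij : i = j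
  · rw [hij]
  ext m
  simp only [coeff_pderiv, Finsupp.add_apply, Finsupp.single_apply, if_neg hij,
    if_neg (Ne.symm hij), add_zero, add_right_comm m]
  ring

theorem eq_C_coeff_zero_of_pderiv_eq_zero [CommSemiring R] [NoZeroDivisors R] [CharZero R]
    {p : MvPolynomial σ R} (hp : ∀ i, pderiv i p = 0) : p = C (coeff 0 p) := by
  classical
  ext m
  rw [coeff_C]
  split_ifs with hm
  · rw [hm]
  obtain ⟨i, hi⟩ : ∃ i, m i ≠ 0 := by
    by_contra! h
    exact hm (Finsupp.ext h).symm
  have key := coeff_pderiv (i := i) p (m - Finsupp.single i 1)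
  rw [hp i, coeff_zero,
    tsub_add_cancel_of_le (Finsupp.single_le_iff.2 (Nat.one_le_iff_ne_zero.2 hi))] at key
  exact (mul_eq_zero.1 key.symm).resolve_right (Nat.cast_add_one_ne_zero _)

theorem exists_coeff_eq [CommSemiring R] (c : (σ →₀ ℕ) → R) (hc : (Function.support c).Finite) :
    ∃ p : MvPolynomial σ R, ∀ m, coeff m p = c m :=
  ⟨AddMonoidAlgebra.ofCoeff (Finsupp.ofSupportFinite c hc), fun _ => rfl⟩

def xyExp (a b : ℕ) : Fin 2 →₀ ℕ := Finsupp.single 0 a + Finsupp.single 1 b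

section xyExp

variable {a b : ℕ}

@[simp] theorem xyExp_apply_zero : xyExp a b 0 = a := by simp [xyExp]

@[simp] theorem xyExp_apply_one : xyExp a b 1 = b := by simp [xyExp]

theorem xyExp_zero_zero : xyExp 0 0 = 0 := by simp [xyExp]

theorem xyExp_eta (m : Fin 2 →₀ ℕ) : xyExp (m 0) (m 1) = m := by
  ext i
  fin_cases i <;> simp

theorem xyExp_add_single_zero : xyExp a b + Finsupp.single 0 1 = xyExp (a + 1) b := by
  ext i
  fin_cases i <;> simp

theorem single_one_add_xyExp : Finsupp.single 1 1 + xyExp a b = xyExp a (b + 1) := by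
  ext i
  fin_cases i <;> simp [add_comm]

theorem xyExp_add_single_one : xyExp a b + Finsupp.single 1 1 = xyExp a (b + 1) := by
  rw [add_comm, single_one_add_xyExp]

variable [CommSemiring R]

theorem ext_xyExp {p q : MvPolynomial (Fin 2) R}
    (h : ∀ a b, coeff (xyExp a b) p = coeff (xyExp a b) q) : p = q := by
  ext m
  rw [← xyExp_eta m]
  exact h _ _

theorem exists_coeff_xyExp_eq (c : ℕ → ℕ → R)
    (hc : (Function.support (Function.uncurry c)).Finite) :
    ∃ p : MvPolynomial (Fin 2) R, ∀ a b, coeff (xyExp a b) p = c a b := by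
  have hinj : Function.Injective fun m : Fin 2 →₀ ℕ => (m 0, m 1) := fun m n hmn => by
    rw [← xyExp_eta m, ← xyExp_eta n]
    simp_all
  obtain ⟨p, hp⟩ := exists_coeff_eq (fun m => c (m 0) (m 1)) (hc.preimage hinj.injOn)
  exact ⟨p, fun a b => by simp [hp]⟩

theorem coeff_xyExp_C (c : R) : coeff (xyExp a b) (C c) = if a = 0 ∧ b = 0 then c else 0 := by
  simp [coeff_C, Finsupp.ext_iff, Fin.forall_fin_two, eq_comm]

theorem coeff_xyExp_pderiv_zero (p : MvPolynomial (Fin 2) R) :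
    coeff (xyExp a b) (pderiv 0 p) = coeff (xyExp (a + 1) b) p * (a + 1) := by
  rw [coeff_pderiv, xyExp_add_single_zero, xyExp_apply_zero]

theorem coeff_xyExp_pderiv_one (p : MvPolynomial (Fin 2) R) :
    coeff (xyExp a b) (pderiv 1 p) = coeff (xyExp a (b + 1)) p * (b + 1) := by
  rw [coeff_pderiv, xyExp_add_single_one, xyExp_apply_one]

theorem coeff_xyExp_zero_X_one_mul (p : MvPolynomial (Fin 2) R) :
    coeff (xyExp a 0) (X 1 * p) = 0 := by
  rw [coeff_X_mul', if_neg (by simp)]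

theorem coeff_xyExp_succ_X_one_mul (p : MvPolynomial (Fin 2) R) :
    coeff (xyExp a (b + 1)) (X 1 * p) = coeff (xyExp a b) p := by
  rw [← single_one_add_xyExp, coeff_X_mul]

end xyExp

end MvPolynomial

@[simp] theorem pderiv_zero_Xv : pderiv 0 Xv = 1 := pderiv_X_self 0

@[simp] theorem pderiv_one_Xv : pderiv 1 Xv = 0 := pderiv_X_of_ne (by decide)

@[simp] theorem pderiv_zero_Yv : pderiv 0 Yv = 0 := pderiv_X_of_ne (by decide)

@[simp] theorem pderiv_one_Yv : pderiv 1 Yv = 1 := pderiv_X_self 1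

theorem Yv_ne_zero : Yv ≠ 0 := X_ne_zero 1

theorem br_anticomm (p q : R2) : br q p = -br p q := by
  unfold br
  ring

theorem br_Xv (h : R2) : br h Xv = -(Yv * pderiv 1 h) := by
  simp [br]

theorem br_Yv (h : R2) : br h Yv = Yv * pderiv 0 h := by
  simp [br]

@[simp] theorem vf_Xv (f g : R2) : vf f g Xv = f := by
  simp [vf]

@[simp] theorem vf_Yv (f g : R2) : vf f g Yv = g := by
  simp [vf]

theorem forall_br_eq_zero_iff (h : R2) : (∀ f : R2, br h f = 0) ↔ ∃ c : ℂ, h = C c := by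
  constructor
  · intro hh
    have h0 : pderiv 0 h = 0 := by
      simpa [br_Yv, Yv_ne_zero] using hh Yv
    have h1 : pderiv 1 h = 0 := by
      simpa [br_Xv, Yv_ne_zero] using hh Xv
    exact ⟨_, eq_C_coeff_zero_of_pderiv_eq_zero (Fin.forall_fin_two.2 ⟨h0, h1⟩)⟩
  · rintro ⟨c, rfl⟩ f
    simp [br]

theorem isPoissonVF_one_zero : IsPoissonVF 1 0 := by
  intro p q
  simp only [vf, br, one_mul, zero_mul, add_zero, pderiv_mul, pderiv_zero_Yv, map_sub]
  rw [pderiv_pderiv_comm 1 0 p, pderiv_pderiv_comm 1 0 q]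
  ring

theorem not_exists_hamiltonian_one_zero :
    ¬ ∃ h : R2, (1 : R2) = - (Yv * pderiv 1 h) ∧ (0 : R2) = Yv * pderiv 0 h := by
  rintro ⟨h, h1, -⟩
  have key := congrArg (coeff (xyExp 0 0)) h1
  rw [coeff_neg, Yv, coeff_xyExp_zero_X_one_mul, xyExp_zero_zero, coeff_zero_one] at key
  simp at key

namespace IsPoissonVF

variable {f g : R2}

theorem snd_eq (hp : IsPoissonVF f g) : g = Yv * pderiv 0 f + Yv * pderiv 1 g := by
  simpa [br_Yv, br_anticomm g Xv, br_Xv] using hp Xv Yv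

theorem coeff_xyExp_zero_snd (hp : IsPoissonVF f g) (a : ℕ) : coeff (xyExp a 0) g = 0 := by
  rw [hp.snd_eq, coeff_add, Yv, coeff_xyExp_zero_X_one_mul, coeff_xyExp_zero_X_one_mul, add_zero]

theorem coeff_xyExp_succ (hp : IsPoissonVF f g) (a b : ℕ) :
    coeff (xyExp (a + 1) b) f * (a + 1) + coeff (xyExp a (b + 1)) g * b = 0 := by
  have key := congrArg (coeff (xyExp a (b + 1))) hp.snd_eq
  rw [coeff_add, Yv, coeff_xyExp_succ_X_one_mul, coeff_xyExp_succ_X_one_mul,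
    coeff_xyExp_pderiv_zero, coeff_xyExp_pderiv_one] at key
  linear_combination -key

end IsPoissonVF

def hamiltonianPotentialCoeff (f g : R2) : ℕ → ℕ → ℂ
  | 0, 0 => 0
  | a + 1, 0 => coeff (xyExp a 1) g / (a + 1)
  | a, b + 1 => -coeff (xyExp a (b + 1)) f / (b + 1)

theorem finite_support_hamiltonianPotentialCoeff (f g : R2) :
    (Function.support (Function.uncurry (hamiltonianPotentialCoeff f g))).Finite := by
  refine (((f.support.finite_toSet.image fun m => (m 0, m 1))).union
    (g.support.finite_toSet.image fun m => (m 0 + 1, 0))).subset ?_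
  rintro ⟨a, _ | b⟩ hne
  · rcases a with _ | a
    · simp [hamiltonianPotentialCoeff] at hne
    · refine Or.inr ⟨xyExp a 1, ?_, by simp⟩
      simp_all [hamiltonianPotentialCoeff]
  · refine Or.inl ⟨xyExp a (b + 1), ?_, by simp⟩
    simp_all [hamiltonianPotentialCoeff]

theorem IsPoissonVF.exists_hamiltonian {f g : R2} (hp : IsPoissonVF f g) :
    ∃ (c : ℂ) (h : R2), f = C c + -(Yv * pderiv 1 h) ∧ g = Yv * pderiv 0 h := by
  obtain ⟨h, hh⟩ := exists_coeff_xyExp_eq _ (finite_support_hamiltonianPotentialCoeff f g)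
  refine ⟨coeff 0 f, h, ext_xyExp fun a b => ?_, ext_xyExp fun a b => ?_⟩
  · rw [coeff_add, coeff_neg, coeff_xyExp_C, Yv]
    rcases b with _ | b
    · rw [coeff_xyExp_zero_X_one_mul, neg_zero, add_zero]
      rcases a with _ | a
      · simp [xyExp_zero_zero]
      · simpa [Nat.cast_add_one_ne_zero] using hp.coeff_xyExp_succ a 0
    · rw [coeff_xyExp_succ_X_one_mul, coeff_xyExp_pderiv_one, hh, hamiltonianPotentialCoeff,
        if_neg fun hab => b.succ_ne_zero hab.2]
      field_simp
      ring
  · rw [Yv]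
    rcases b with _ | b
    · rw [coeff_xyExp_zero_X_one_mul, hp.coeff_xyExp_zero_snd]
    · rw [coeff_xyExp_succ_X_one_mul, coeff_xyExp_pderiv_zero, hh]
      rcases b with _ | b
      · rw [hamiltonianPotentialCoeff]
        field_simp
      · have key := hp.coeff_xyExp_succ a (b + 1)
        push_cast at key
        rw [hamiltonianPotentialCoeff]
        field_simp
        linear_combination key

/-- For `π₁ = y ∂/∂x ∧ ∂/∂y` on `ℂ[x,y]`: the Casimirs are exactly the constants
(`H⁰ = ℂ`), and every Poisson vector field is a constant multiple of `∂/∂x` plus a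
Hamiltonian vector field, with `∂/∂x` Poisson but not Hamiltonian (`H¹ = ℂ·[∂/∂x]`). -/
theorem stmt_8 :
    (∀ h : R2, (∀ f : R2, br h f = 0) ↔ ∃ c : ℂ, h = C c) ∧
    (∀ f g : R2, IsPoissonVF f g →
      ∃ (c : ℂ) (h : R2),
        f = C c + (- (Yv * pderiv 1 h)) ∧ g = Yv * pderiv 0 h) ∧
    IsPoissonVF 1 0 ∧
    ¬ ∃ h : R2, (1 : R2) = - (Yv * pderiv 1 h) ∧ (0 : R2) = Yv * pderiv 0 h :=
  ⟨forall_br_eq_zero_iff, fun _ _ hp => hp.exists_hamiltonian, isPoissonVF_one_zero,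
    not_exists_hamiltonian_one_zero⟩

end
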